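/- Let f1 = U0 X1^{d1} + ... + U_{d1} X2^{d1} and f2 = V0 X1^{d2} + ... + V_{d2} X2^{d2} be homogeneous of degrees d1 ≤ d2 forming a regular sequence over a commutative ring A. Write sylv_{(0,0)}(f1,f2) = Σ_{i=0}^{δ} q_i X1^{δ−i} X2^i with q_i ∈ A, where δ = d1+d2−2. Then Res(f1,f2) = (−1)^{d1+1} Σ_{i=0}^{δ} SRes_{δ−i}(f1,f2) · q_i in A, where SRes_j denotes the j-th first-order subresultant of f1 and f2. -/

import Mathlib

open MvPolynomial

noncomputable section

/-- The Sylvester matrix of two binary forms of degrees `d1`, `d2` with coefficient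
sequences `U` (so `f1 = Σ U i · X1^{d1−i} X2^i`) and `V`. -/
def sylMatrix {A : Type*} [CommRing A] (d1 d2 : ℕ) (U V : ℕ → A) :
    Matrix (Fin (d1 + d2)) (Fin (d1 + d2)) A :=
  Matrix.of fun i j =>
    if (j : ℕ) < d2 then
      (if (j : ℕ) ≤ i ∧ (i : ℕ) ≤ (j : ℕ) + d1 then U ((i : ℕ) - j) else 0)
    else
      (if (j : ℕ) - d2 ≤ i ∧ (i : ℕ) ≤ (j : ℕ) - d2 + d2 then
        V ((i : ℕ) - ((j : ℕ) - d2)) else 0)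

/-- The resultant `Res(f1,f2)` as the determinant of the Sylvester matrix. -/
def res {A : Type*} [CommRing A] (d1 d2 : ℕ) (U V : ℕ → A) : A :=
  (sylMatrix d1 d2 U V).det

/-- The `(δ+1) × δ` matrix of the first-order subresultants: `d2 − 1` columns of shifted
`f1`-coefficients followed by `d1 − 1` columns of shifted `f2`-coefficients
(here `δ = d1 + d2 − 2` is passed as a parameter). -/
def subresMatrix {A : Type*} [CommRing A] (d1 d2 δ : ℕ) (U V : ℕ → A) :
    Matrix (Fin (δ + 1)) (Fin δ) A :=
  Matrix.of fun i j =>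
    if (j : ℕ) < d2 - 1 then
      (if (j : ℕ) ≤ i ∧ (i : ℕ) ≤ (j : ℕ) + d1 then U ((i : ℕ) - j) else 0)
    else
      (if (j : ℕ) - (d2 - 1) ≤ i ∧ (i : ℕ) ≤ (j : ℕ) - (d2 - 1) + d2 then
        V ((i : ℕ) - ((j : ℕ) - (d2 - 1))) else 0)

/-- The first-order subresultant `SRes_k(f1,f2)`: the signed `δ`-minor of the Sylvester
matrix obtained by deleting row `δ − k` of `subresMatrix`, with the sign coming from the
border expansion `det = Σ_i SRes_{δ−i} T_i` of the bordered Sylvester determinant. -/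
def sres {A : Type*} [CommRing A] (d1 d2 δ : ℕ) (U V : ℕ → A) (k : ℕ) : A :=
  (-1 : A) ^ ((δ - k) + δ) *
    ((subresMatrix d1 d2 δ U V).submatrix
      (Fin.succAbove ⟨δ - k, Nat.lt_succ_of_le (Nat.sub_le δ k)⟩) id).det

/-!
Write `f1 = X0 a + X1 b` and `f2 = X0 c + X1 d`, so that `sylv = a d - b c`. The identities
`d f1 - b f2 = X0 sylv` and `a f2 - c f1 = X1 sylv` say that multiplying the Sylvester matrix on
the right by the identity matrix with two columns replaced (whose determinant is the top
coefficient `q_δ = a_top d_top - b_top c_top` of `sylv`) replaces the last column of each block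
by the coefficient vectors of `X0 sylv` and `X1 sylv`. The bottom row of the new matrix is
`(0, …, 0, q_δ)`; deleting it together with the last column leaves the subresultant matrix
bordered by the coefficients of `sylv`, whose Laplace expansion along that border is
`± Σ SRes_{δ-i} q_i`. Hence `q_δ Res = q_δ (-1)^(d1+1) Σ SRes_{δ-i} q_i`. Over the universal
coefficient ring `ℤ[a, b, c, d]` the element `q_δ` is a nonzero element of a domain, so it
cancels there, and the identity specializes to every commutative ring.
-/

lemma Fin.val_succAbove_eq_ite {n : ℕ} (p : Fin (n + 1)) (k : Fin n) :
    (p.succAbove k : ℕ) = if (k : ℕ) < p then (k : ℕ) else (k : ℕ) + 1 := by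
  rw [Fin.succAbove]
  split_ifs <;> simp_all [Fin.lt_def]

namespace Matrix

variable {R : Type*} [CommRing R]

theorem det_one_updateCol_updateCol {n : Type*} [Fintype n] [DecidableEq n] {c l : n}
    (hcl : c ≠ l) (u v : n → R) :
    (((1 : Matrix n n R).updateCol c u).updateCol l v).det = u c * v l - u l * v c := by
  -- the matrix is `1 + A * B` with `A`, `B` of rank two: Weinstein–Aronszajn makes it `2 × 2`
  set A : Matrix n (Fin 2) R :=
    of fun i => ![u i - (1 : Matrix n n R) i c, v i - (1 : Matrix n n R) i l]
  set B : Matrix (Fin 2) n R := (1 : Matrix n n R).submatrix ![c, l] (Equiv.refl n)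
  have hP : ((1 : Matrix n n R).updateCol c u).updateCol l v = 1 + A * B := by
    ext i j
    simp only [A, B, add_apply, mul_apply, Fin.sum_univ_two, of_apply, submatrix_apply,
      Matrix.cons_val_zero, Matrix.cons_val_one, updateCol_apply, Equiv.refl_apply, one_apply]
    obtain rfl | hjl := eq_or_ne j l
    · simp [hcl]
    obtain rfl | hjc := eq_or_ne j c
    · simp [hjl, hjl.symm]
    · simp [hjl, hjc, hjl.symm, hjc.symm]
  rw [hP, det_one_add_mul_comm, one_submatrix_mul, det_fin_two]
  simp only [add_apply, submatrix_apply, A, of_apply, Function.comp_apply, Equiv.refl_symm,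
    Equiv.refl_apply, id, Matrix.cons_val_zero, Matrix.cons_val_one, one_apply_eq,
    one_apply_ne hcl, one_apply_ne hcl.symm, one_apply_ne (zero_ne_one (α := Fin 2)),
    one_apply_ne (one_ne_zero (α := Fin 2))]
  ring

theorem det_eq_mul_det_submatrix_castSucc {m : ℕ} (M : Matrix (Fin (m + 1)) (Fin (m + 1)) R)
    (hM : ∀ j : Fin m, M (Fin.last m) j.castSucc = 0) :
    M.det = M (Fin.last m) (Fin.last m) * (M.submatrix Fin.castSucc Fin.castSucc).det := by
  rw [det_succ_row M (Fin.last m), Fin.sum_univ_castSucc]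
  simp [hM, ← two_mul]

theorem det_of_insertNth_col {m : ℕ} (M : Matrix (Fin (m + 1)) (Fin m) R) (p : Fin (m + 1))
    (T : Fin (m + 1) → R) :
    (of fun i => p.insertNth (T i) (M i)).det =
      ∑ i : Fin (m + 1), (-1) ^ (i + p : ℕ) * T i * (M.submatrix i.succAbove id).det := by
  rw [det_succ_column _ p]
  refine Finset.sum_congr rfl fun i _ => ?_
  have hminor : (of fun i => p.insertNth (T i) (M i)).submatrix i.succAbove p.succAbove =
      M.submatrix i.succAbove id := by
    ext; simp
  simp [hminor]

end Matrix

namespace MvPolynomial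

variable {R : Type*} [CommRing R]

def binExp (a b : ℕ) : Fin 2 →₀ ℕ := Finsupp.single 0 a + Finsupp.single 1 b

@[simp] lemma binExp_apply_zero (a b : ℕ) : binExp a b 0 = a := by simp [binExp]

@[simp] lemma binExp_apply_one (a b : ℕ) : binExp a b 1 = b := by simp [binExp]

lemma binExp_eta (m : Fin 2 →₀ ℕ) : binExp (m 0) (m 1) = m := by
  ext i; fin_cases i <;> simp

lemma binExp_inj {a b a' b' : ℕ} : binExp a b = binExp a' b' ↔ a = a' ∧ b = b' :=
  ⟨fun h => ⟨by simpa using DFunLike.congr_fun h 0, by simpa using DFunLike.congr_fun h 1⟩,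
    by rintro ⟨rfl, rfl⟩; rfl⟩

lemma degree_binExp (a b : ℕ) : (binExp a b).degree = a + b := by
  simp [Finsupp.degree_eq_sum, Fin.sum_univ_two]

lemma C_mul_X_pow_mul_X_pow (r : R) (a b : ℕ) :
    C r * X 0 ^ a * X 1 ^ b = monomial (binExp a b) r := by
  simp [binExp, X_pow_eq_monomial, C_mul_monomial, monomial_mul]

def binaryForm (c : ℕ → R) (d : ℕ) : MvPolynomial (Fin 2) R :=
  ∑ i ∈ Finset.range (d + 1), C (c i) * X 0 ^ (d - i) * X 1 ^ i

lemma coeff_binaryForm (c : ℕ → R) (d a b : ℕ) :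
    coeff (binExp a b) (binaryForm c d) = if a + b = d then c b else 0 := by
  simp only [binaryForm, C_mul_X_pow_mul_X_pow, coeff_sum, coeff_monomial, binExp_inj]
  split_ifs with h
  · rw [Finset.sum_eq_single_of_mem b (by simp; omega) (fun i _ hi => if_neg (by omega))]
    simp [← h]
  · exact Finset.sum_eq_zero fun i hi => if_neg (by simp at hi; omega)

lemma isHomogeneous_binaryForm (c : ℕ → R) (d : ℕ) : (binaryForm c d).IsHomogeneous d := by
  refine IsHomogeneous.sum _ _ _ fun i hi => ?_
  rw [C_mul_X_pow_mul_X_pow]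
  exact isHomogeneous_monomial _ (by simp at hi; simp [degree_binExp]; omega)

lemma IsHomogeneous.eq_binaryForm {p : MvPolynomial (Fin 2) R} {d : ℕ} (hp : p.IsHomogeneous d) :
    p = binaryForm (fun i => coeff (binExp (d - i) i) p) d := by
  ext m
  rw [← binExp_eta m, coeff_binaryForm]
  split_ifs with h
  · congr 2; omega
  · exact hp.coeff_eq_zero (by rw [degree_binExp]; exact h)

lemma map_binaryForm {S : Type*} [CommRing S] (φ : R →+* S) (c : ℕ → R) (d : ℕ) :
    map φ (binaryForm c d) = binaryForm (fun i => φ (c i)) d := by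
  simp [binaryForm]

lemma eval_binaryForm (c : ℕ → R) (d : ℕ) : eval ![0, 1] (binaryForm c d) = c d := by
  rw [binaryForm, map_sum, Finset.sum_eq_single_of_mem d (by simp)]
  · simp
  · intro i hi hid
    simp at hi
    simp [zero_pow (show d - i ≠ 0 by omega)]

lemma coeff_X_pow_mul_X_pow_mul (p : MvPolynomial (Fin 2) R) (s t a b : ℕ) :
    coeff (binExp a b) (X 0 ^ s * X 1 ^ t * p) =
      if s ≤ a ∧ t ≤ b then coeff (binExp (a - s) (b - t)) p else 0 := by
  have hst : (X 0 ^ s * X 1 ^ t : MvPolynomial (Fin 2) R) = monomial (binExp s t) 1 := by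
    rw [← C_mul_X_pow_mul_X_pow, C_1, one_mul]
  rw [hst, coeff_monomial_mul', one_mul]
  congr 1
  · simp [Finsupp.le_def, Fin.forall_fin_two]
  · congr 1; ext i; fin_cases i <;> simp

lemma coeff_X_zero_mul (p : MvPolynomial (Fin 2) R) (a b : ℕ) :
    coeff (binExp a b) (X 0 * p) = if 1 ≤ a then coeff (binExp (a - 1) b) p else 0 := by
  simpa using coeff_X_pow_mul_X_pow_mul p 1 0 a b

lemma coeff_X_one_mul (p : MvPolynomial (Fin 2) R) (a b : ℕ) :
    coeff (binExp a b) (X 1 * p) = if 1 ≤ b then coeff (binExp a (b - 1)) p else 0 := by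
  simpa using coeff_X_pow_mul_X_pow_mul p 0 1 a b

lemma binaryForm_neg (c : ℕ → R) (d : ℕ) :
    binaryForm (fun i => -c i) d = -binaryForm c d := by
  simp [binaryForm, ← Finset.sum_neg_distrib]

lemma coeff_binaryForm_mul (c : ℕ → R) (d : ℕ) (p : MvPolynomial (Fin 2) R)
    (m : Fin 2 →₀ ℕ) :
    coeff m (binaryForm c d * p) =
      ∑ i : Fin (d + 1), c i * coeff m (X 0 ^ (d - i) * X 1 ^ (i : ℕ) * p) := by
  simp only [binaryForm, Finset.sum_mul, coeff_sum, Finset.sum_range, mul_assoc, coeff_C_mul]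

lemma isHomogeneous_X_mul_binaryForm_add (a b : ℕ → R) (e : ℕ) :
    (X 0 * binaryForm a e + X 1 * binaryForm b e).IsHomogeneous (e + 1) := by
  rw [add_comm e]
  exact ((isHomogeneous_X R 0).mul (isHomogeneous_binaryForm a e)).add
    ((isHomogeneous_X R 1).mul (isHomogeneous_binaryForm b e))

lemma isHomogeneous_sylvesterForm (a b c d : ℕ → R) (e1 e2 : ℕ) :
    (binaryForm a e1 * binaryForm d e2 - binaryForm b e1 * binaryForm c e2).IsHomogeneous
      (e1 + e2) :=
  ((isHomogeneous_binaryForm a e1).mul (isHomogeneous_binaryForm d e2)).sub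
    ((isHomogeneous_binaryForm b e1).mul (isHomogeneous_binaryForm c e2))

lemma map_coeff_of_map_eq_binaryForm {S : Type*} [CommRing S] {φ : R →+* S}
    {P : MvPolynomial (Fin 2) R} {c : ℕ → S} {D : ℕ} (h : map φ P = binaryForm c D) {i : ℕ}
    (hi : i ≤ D) :
    φ (coeff (binExp (D - i) i) P) = c i := by
  rw [← coeff_map, h, coeff_binaryForm, if_pos (by omega)]

end MvPolynomial

section SylvesterForm

open Matrix

variable {R : Type*} [CommRing R]

-- row `i` of `sylMatrix d1 d2` holds the coefficients of `X0 ^ (D - i) * X1 ^ i`, `D = d1 + d2 - 1`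
def coeffVec {n : ℕ} (D : ℕ) (p : MvPolynomial (Fin 2) R) : Fin n → R :=
  fun i => coeff (binExp (D - i) i) p

def sylVec {n : ℕ} (e2 : ℕ) (g1 g2 : ℕ → R) : Fin n → R :=
  fun j => if (j : ℕ) < e2 + 1 then g1 j else g2 (j - (e2 + 1))

lemma sylMatrix_apply_of_lt (e1 e2 : ℕ) (U V : ℕ → R) (i j : Fin (e1 + 1 + (e2 + 1)))
    (hj : (j : ℕ) < e2 + 1) :
    sylMatrix (e1 + 1) (e2 + 1) U V i j =
      coeffVec (e1 + e2 + 1) (X 0 ^ (e2 - j) * X 1 ^ (j : ℕ) * binaryForm U (e1 + 1)) i := by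
  have hi := i.isLt
  simp only [sylMatrix, coeffVec, of_apply, coeff_X_pow_mul_X_pow_mul, coeff_binaryForm, if_pos hj]
  split_ifs <;> first | rfl | omega

lemma sylMatrix_apply_of_le (e1 e2 : ℕ) (U V : ℕ → R) (i j : Fin (e1 + 1 + (e2 + 1)))
    (hj : e2 + 1 ≤ j) :
    sylMatrix (e1 + 1) (e2 + 1) U V i j =
      coeffVec (e1 + e2 + 1)
        (X 0 ^ (e1 - (j - (e2 + 1))) * X 1 ^ (j - (e2 + 1)) * binaryForm V (e2 + 1)) i := by
  have hi := i.isLt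
  have hj' := j.isLt
  simp only [sylMatrix, coeffVec, of_apply, coeff_X_pow_mul_X_pow_mul, coeff_binaryForm,
    if_neg (show ¬ (j : ℕ) < e2 + 1 by omega)]
  split_ifs <;> first | rfl | omega

theorem sylMatrix_mulVec_sylVec (e1 e2 : ℕ) (U V g1 g2 : ℕ → R) :
    sylMatrix (e1 + 1) (e2 + 1) U V *ᵥ sylVec e2 g1 g2 =
      coeffVec (e1 + e2 + 1)
        (binaryForm g1 e2 * binaryForm U (e1 + 1) + binaryForm g2 e1 * binaryForm V (e2 + 1)) := by
  ext i
  rw [mulVec, dotProduct, ← (finCongr (add_comm (e2 + 1) (e1 + 1))).sum_comp, Fin.sum_univ_add,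
    coeffVec, coeff_add, coeff_binaryForm_mul, coeff_binaryForm_mul]
  congr 1 <;> refine Finset.sum_congr rfl fun j _ => ?_
  · rw [sylMatrix_apply_of_lt _ _ _ _ _ _ (by simpa using j.isLt)]
    simp [sylVec, coeffVec, mul_comm, j.is_le]
  · rw [sylMatrix_apply_of_le _ _ _ _ _ _ (by simp)]
    simp [sylVec, coeffVec, mul_comm, show ¬ (j : ℕ) + (e2 + 1) ≤ e2 by omega]

lemma sres_sub_eq_det {d1 d2 δ : ℕ} (U V : ℕ → R) (i : Fin (δ + 1)) :
    sres d1 d2 δ U V (δ - i) =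
      (-1) ^ (i + δ : ℕ) * ((subresMatrix d1 d2 δ U V).submatrix i.succAbove id).det := by
  have hi : (⟨δ - (δ - i), by omega⟩ : Fin (δ + 1)) = i := Fin.ext (by simp; omega)
  rw [sres, hi, Nat.sub_sub_self (Nat.lt_succ_iff.mp i.isLt)]

theorem det_insertNth_subresMatrix {d1 d2 δ : ℕ} (U V : ℕ → R) (p : Fin (δ + 1))
    (T : Fin (δ + 1) → R) :
    (of fun i => p.insertNth (T i) (subresMatrix d1 d2 δ U V i)).det =
      (-1) ^ (p + δ : ℕ) * ∑ i : Fin (δ + 1), sres d1 d2 δ U V (δ - i) * T i := by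
  rw [det_of_insertNth_col, Finset.mul_sum]
  refine Finset.sum_congr rfl fun i _ => ?_
  have hsign : (-1 : R) ^ (p + δ : ℕ) * (-1) ^ (i + δ : ℕ) = (-1) ^ (i + p : ℕ) := by
    rw [← pow_add, show (p + δ + (i + δ) : ℕ) = i + p + 2 * δ by ring, pow_add, pow_mul,
      neg_one_sq, one_pow, mul_one]
  rw [sres_sub_eq_det, ← hsign]
  ring

lemma subresMatrix_apply_eq_sylMatrix (e1 e2 : ℕ) (U V : ℕ → R) (i : Fin (e1 + e2 + 1))
    (k : Fin (e1 + e2)) (i' j' : Fin (e1 + 1 + (e2 + 1))) (hi : (i' : ℕ) = i)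
    (hj : (j' : ℕ) = if (k : ℕ) < e2 then (k : ℕ) else (k : ℕ) + 1) :
    subresMatrix (e1 + 1) (e2 + 1) (e1 + e2) U V i k = sylMatrix (e1 + 1) (e2 + 1) U V i' j' := by
  have hk := k.isLt
  simp only [subresMatrix, sylMatrix, of_apply, hi, hj, Nat.add_sub_cancel]
  split_ifs <;> first | rfl | omega | (congr 1; omega)

lemma sylMatrix_last_row_eq_zero (e1 e2 : ℕ) (U V : ℕ → R) (i j : Fin (e1 + 1 + (e2 + 1)))
    (hi : (i : ℕ) = e1 + e2 + 1) (hj : (j : ℕ) ≠ e2) (hj' : (j : ℕ) ≠ e1 + e2 + 1) :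
    sylMatrix (e1 + 1) (e2 + 1) U V i j = 0 := by
  have := j.isLt
  simp only [sylMatrix, of_apply, hi]
  split_ifs <;> first | rfl | omega

-- columns `e2` and `e1 + e2 + 1` are the last columns of the `f1`- and of the `f2`-block
def sylFormMatrix (e1 e2 : ℕ) (U V q : ℕ → R) :
    Matrix (Fin (e1 + 1 + (e2 + 1))) (Fin (e1 + 1 + (e2 + 1))) R :=
  ((sylMatrix (e1 + 1) (e2 + 1) U V).updateCol ⟨e2, by omega⟩
      (coeffVec (e1 + e2 + 1) (X 0 * binaryForm q (e1 + e2)))).updateCol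
    (Fin.last (e1 + 1 + e2)) (coeffVec (e1 + e2 + 1) (X 1 * binaryForm q (e1 + e2)))

section sylFormMatrix

variable (e1 e2 : ℕ) (U V q : ℕ → R)

lemma sylFormMatrix_last_castSucc (j : Fin (e1 + 1 + e2)) :
    sylFormMatrix e1 e2 U V q (Fin.last (e1 + 1 + e2)) j.castSucc = 0 := by
  have hj := j.isLt
  have hjL : (j.castSucc : Fin (e1 + 1 + (e2 + 1))) ≠ Fin.last (e1 + 1 + e2) := by
    simp [Fin.ext_iff]; omega
  simp only [sylFormMatrix, updateCol_apply, if_neg hjL]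
  split_ifs with hjF
  · rw [coeffVec, coeff_X_zero_mul, if_neg (by simp)]
  · exact sylMatrix_last_row_eq_zero _ _ _ _ _ _ (by simp; omega)
      (fun h => hjF (Fin.ext h)) (by simp; omega)

lemma sylFormMatrix_last_last :
    sylFormMatrix e1 e2 U V q (Fin.last (e1 + 1 + e2)) (Fin.last (e1 + 1 + e2)) = q (e1 + e2) := by
  rw [sylFormMatrix, updateCol_self, coeffVec, coeff_X_one_mul, coeff_binaryForm]
  simp

lemma sylFormMatrix_minor (hE : e1 + e2 + 1 = e1 + 1 + e2) :
    ((sylFormMatrix e1 e2 U V q).submatrix Fin.castSucc Fin.castSucc).submatrix (finCongr hE)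
        (finCongr hE) =
      of fun i : Fin (e1 + e2 + 1) =>
        (⟨e2, by omega⟩ : Fin (e1 + e2 + 1)).insertNth (q i)
          (subresMatrix (e1 + 1) (e2 + 1) (e1 + e2) U V i) := by
  ext i j
  have hi := i.isLt
  have hv : (((finCongr hE i).castSucc : Fin (e1 + 1 + (e2 + 1))) : ℕ) = i := rfl
  refine Fin.succAboveCases ⟨e2, by omega⟩ ?_ (fun k => ?_) j
  · have hFL : ((finCongr hE ⟨e2, by omega⟩).castSucc : Fin (e1 + 1 + (e2 + 1))) ≠
        Fin.last (e1 + 1 + e2) := Fin.ne_of_val_ne (show e2 ≠ e1 + 1 + e2 by omega)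
    have hFF : ((finCongr hE ⟨e2, by omega⟩).castSucc : Fin (e1 + 1 + (e2 + 1))) =
        ⟨e2, by omega⟩ := rfl
    simp only [sylFormMatrix, submatrix_apply, of_apply, Fin.insertNth_apply_same, updateCol_apply,
      if_neg hFL, if_pos hFF, coeffVec, coeff_X_zero_mul, coeff_binaryForm, hv]
    split_ifs <;> first | rfl | omega
  · have hk := Fin.val_succAbove_eq_ite ⟨e2, by omega⟩ k
    have hkL : ((finCongr hE (Fin.succAbove ⟨e2, by omega⟩ k)).castSucc :
        Fin (e1 + 1 + (e2 + 1))) ≠ Fin.last (e1 + 1 + e2) := by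
      simp [Fin.ext_iff, hk]; split_ifs <;> omega
    have hkF : ((finCongr hE (Fin.succAbove ⟨e2, by omega⟩ k)).castSucc :
        Fin (e1 + 1 + (e2 + 1))) ≠ ⟨e2, by omega⟩ := by
      simp [Fin.ext_iff, hk]; split_ifs <;> omega
    simp only [sylFormMatrix, submatrix_apply, of_apply, Fin.insertNth_apply_succAbove,
      updateCol_apply, if_neg hkL, if_neg hkF]
    exact (subresMatrix_apply_eq_sylMatrix _ _ _ _ _ _ _ _ rfl hk).symm

theorem det_sylFormMatrix :
    (sylFormMatrix e1 e2 U V q).det = q (e1 + e2) * ((-1) ^ (e1 + 1 + 1) *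
      ∑ i ∈ Finset.range (e1 + e2 + 1),
        sres (e1 + 1) (e2 + 1) (e1 + e2) U V (e1 + e2 - i) * q i) := by
  have hE : e1 + e2 + 1 = e1 + 1 + e2 := by omega
  have hsign : (-1 : R) ^ (e2 + (e1 + e2)) = (-1) ^ (e1 + 1 + 1) := by
    rw [neg_one_pow_eq_pow_mod_two, neg_one_pow_eq_pow_mod_two (n := e1 + 1 + 1)]
    congr 1
    omega
  rw [det_eq_mul_det_submatrix_castSucc (m := e1 + 1 + e2) _
      (sylFormMatrix_last_castSucc e1 e2 U V q),
    sylFormMatrix_last_last, ← det_submatrix_equiv_self (finCongr hE),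
    sylFormMatrix_minor _ _ _ _ _ hE, det_insertNth_subresMatrix, Finset.sum_range
      (fun i => sres (e1 + 1) (e2 + 1) (e1 + e2) U V (e1 + e2 - i) * q i), hsign]

end sylFormMatrix

def sylTransform (e1 e2 : ℕ) (a b c d : ℕ → R) :
    Matrix (Fin (e1 + 1 + (e2 + 1))) (Fin (e1 + 1 + (e2 + 1))) R :=
  ((1 : Matrix _ _ R).updateCol ⟨e2, by omega⟩ (sylVec e2 d fun i => -b i)).updateCol
    (Fin.last (e1 + 1 + e2)) (sylVec e2 (fun i => -c i) a)

lemma det_sylTransform (e1 e2 : ℕ) (a b c d : ℕ → R) :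
    (sylTransform e1 e2 a b c d).det = a e1 * d e2 - b e1 * c e2 := by
  rw [sylTransform, det_one_updateCol_updateCol (Fin.ne_of_val_ne (by simp))]
  simp [sylVec, show e1 + 1 + e2 - (e2 + 1) = e1 by omega]
  ring

section Decomposition

variable {e1 e2 : ℕ} {U V a b c d q : ℕ → R}
  (hU : binaryForm U (e1 + 1) = X 0 * binaryForm a e1 + X 1 * binaryForm b e1)
  (hV : binaryForm V (e2 + 1) = X 0 * binaryForm c e2 + X 1 * binaryForm d e2)
  (hq : binaryForm a e1 * binaryForm d e2 - binaryForm b e1 * binaryForm c e2 =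
    binaryForm q (e1 + e2))
include hq

lemma sylvesterForm_top_coeff : q (e1 + e2) = a e1 * d e2 - b e1 * c e2 := by
  simpa [eval_binaryForm] using (congrArg (eval ![0, 1]) hq).symm

include hU hV

lemma sylMatrix_mul_sylTransform :
    sylMatrix (e1 + 1) (e2 + 1) U V * sylTransform e1 e2 a b c d = sylFormMatrix e1 e2 U V q := by
  rw [sylTransform, mul_updateCol, mul_updateCol, Matrix.mul_one, sylMatrix_mulVec_sylVec,
    sylMatrix_mulVec_sylVec, binaryForm_neg, binaryForm_neg, hU, hV, sylFormMatrix, ← hq]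
  congr 3 <;> ring

theorem mul_res_eq_mul_sum_sres :
    q (e1 + e2) * res (e1 + 1) (e2 + 1) U V =
      q (e1 + e2) * ((-1) ^ (e1 + 1 + 1) * ∑ i ∈ Finset.range (e1 + e2 + 1),
        sres (e1 + 1) (e2 + 1) (e1 + e2) U V (e1 + e2 - i) * q i) := by
  rw [← det_sylFormMatrix, ← sylMatrix_mul_sylTransform hU hV hq, det_mul, det_sylTransform,
    ← sylvesterForm_top_coeff hq, res, mul_comm]

end Decomposition

section Transfer

variable {S : Type*} [CommRing S]

lemma sylMatrix_congr {d1 d2 : ℕ} {U U' V V' : ℕ → R} (hU : ∀ i ≤ d1, U i = U' i)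
    (hV : ∀ i ≤ d2, V i = V' i) : sylMatrix d1 d2 U V = sylMatrix d1 d2 U' V' := by
  ext i j
  simp only [sylMatrix, of_apply]
  split_ifs <;> first | rfl | exact hU _ (by omega) | exact hV _ (by omega)

lemma subresMatrix_congr {d1 d2 δ : ℕ} {U U' V V' : ℕ → R} (hU : ∀ i ≤ d1, U i = U' i)
    (hV : ∀ i ≤ d2, V i = V' i) : subresMatrix d1 d2 δ U V = subresMatrix d1 d2 δ U' V' := by
  ext i j
  simp only [subresMatrix, of_apply]
  split_ifs <;> first | rfl | exact hU _ (by omega) | exact hV _ (by omega)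

lemma map_sylMatrix (φ : R →+* S) (d1 d2 : ℕ) (U V : ℕ → R) :
    (sylMatrix d1 d2 U V).map φ = sylMatrix d1 d2 (φ ∘ U) (φ ∘ V) := by
  ext i j
  simp only [sylMatrix, map_apply, of_apply]
  split_ifs <;> simp

lemma map_subresMatrix (φ : R →+* S) (d1 d2 δ : ℕ) (U V : ℕ → R) :
    (subresMatrix d1 d2 δ U V).map φ = subresMatrix d1 d2 δ (φ ∘ U) (φ ∘ V) := by
  ext i j
  simp only [subresMatrix, map_apply, of_apply]
  split_ifs <;> simp

lemma map_res (φ : R →+* S) (d1 d2 : ℕ) (U V : ℕ → R) :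
    φ (res d1 d2 U V) = res d1 d2 (φ ∘ U) (φ ∘ V) := by
  rw [res, res, RingHom.map_det, RingHom.mapMatrix_apply, map_sylMatrix]

lemma map_sres (φ : R →+* S) (d1 d2 δ : ℕ) (U V : ℕ → R) (k : ℕ) :
    φ (sres d1 d2 δ U V k) = sres d1 d2 δ (φ ∘ U) (φ ∘ V) k := by
  rw [sres, sres, map_mul, map_pow, map_neg, map_one, RingHom.map_det, RingHom.mapMatrix_apply,
    ← submatrix_map, map_subresMatrix]

end Transfer

theorem res_eq_sum_sres_mul {e1 e2 : ℕ} {U V a b c d q : ℕ → R}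
    (hU : binaryForm U (e1 + 1) = X 0 * binaryForm a e1 + X 1 * binaryForm b e1)
    (hV : binaryForm V (e2 + 1) = X 0 * binaryForm c e2 + X 1 * binaryForm d e2)
    (hq : binaryForm a e1 * binaryForm d e2 - binaryForm b e1 * binaryForm c e2 =
      binaryForm q (e1 + e2)) :
    res (e1 + 1) (e2 + 1) U V = (-1) ^ (e1 + 1 + 1) * ∑ i ∈ Finset.range (e1 + e2 + 1),
      sres (e1 + 1) (e2 + 1) (e1 + e2) U V (e1 + e2 - i) * q i := by
  let x : Fin 4 → ℕ → MvPolynomial (Fin 4 × ℕ) ℤ := fun k i => X (k, i)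
  let P1 := X 0 * binaryForm (x 0) e1 + X 1 * binaryForm (x 1) e1
  let P2 := X 0 * binaryForm (x 2) e2 + X 1 * binaryForm (x 3) e2
  let Q := binaryForm (x 0) e1 * binaryForm (x 3) e2 - binaryForm (x 1) e1 * binaryForm (x 2) e2
  let U₀ i := coeff (binExp (e1 + 1 - i) i) P1
  let V₀ i := coeff (binExp (e2 + 1 - i) i) P2
  let q₀ i := coeff (binExp (e1 + e2 - i) i) Q
  have hQ : Q = binaryForm q₀ (e1 + e2) := (isHomogeneous_sylvesterForm _ _ _ _ _ _).eq_binaryForm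
  have hq₀ : q₀ (e1 + e2) ≠ 0 := by
    rw [sylvesterForm_top_coeff hQ]
    intro h
    have := congrArg (eval fun v => if v = (0, e1) ∨ v = (3, e2) then (1 : ℤ) else 0) h
    simp [x] at this
  have hgen := mul_left_cancel₀ hq₀ <| mul_res_eq_mul_sum_sres
    (isHomogeneous_X_mul_binaryForm_add (x 0) (x 1) e1).eq_binaryForm.symm
    (isHomogeneous_X_mul_binaryForm_add (x 2) (x 3) e2).eq_binaryForm.symm hQ
  let φ : MvPolynomial (Fin 4 × ℕ) ℤ →+* R :=
    eval₂Hom (Int.castRingHom R) fun v => ![a, b, c, d] v.1 v.2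
  have hU₀ : ∀ i ≤ e1 + 1, (φ ∘ U₀) i = U i := fun i hi =>
    map_coeff_of_map_eq_binaryForm (by simp [P1, hU, map_binaryForm, φ, x]) hi
  have hV₀ : ∀ i ≤ e2 + 1, (φ ∘ V₀) i = V i := fun i hi =>
    map_coeff_of_map_eq_binaryForm (by simp [P2, hV, map_binaryForm, φ, x]) hi
  have hφq₀ : ∀ i ≤ e1 + e2, φ (q₀ i) = q i := fun i hi =>
    map_coeff_of_map_eq_binaryForm (by simp [Q, ← hq, map_binaryForm, φ, x]) hi
  calc res (e1 + 1) (e2 + 1) U V = φ (res (e1 + 1) (e2 + 1) U₀ V₀) := by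
        rw [map_res, res, res, sylMatrix_congr hU₀ hV₀]
    _ = _ := by
        rw [hgen, map_mul, map_pow, map_neg, map_one, map_sum]
        refine congrArg _ (Finset.sum_congr rfl fun i hi => ?_)
        rw [map_mul, map_sres, sres, sres, subresMatrix_congr hU₀ hV₀,
          hφq₀ i (by simp at hi; omega)]

end SylvesterForm

theorem stmt7 {A : Type*} [CommRing A] (d1 d2 : ℕ)
    (hd1 : 1 ≤ d1) (hd12 : d1 ≤ d2) (U V : ℕ → A)
    (f1 f2 : MvPolynomial (Fin 2) A)
    (hf1 : f1 = ∑ i ∈ Finset.range (d1 + 1), C (U i) * X 0 ^ (d1 - i) * X 1 ^ i)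
    (hf2 : f2 = ∑ i ∈ Finset.range (d2 + 1), C (V i) * X 0 ^ (d2 - i) * X 1 ^ i)
    -- a decomposition defining the Sylvester form `sylv_{(0,0)}(f1,f2)` ...
    (a11 a12 a21 a22 : MvPolynomial (Fin 2) A)
    (ha11 : a11.IsHomogeneous (d1 - 1)) (ha12 : a12.IsHomogeneous (d1 - 1))
    (ha21 : a21.IsHomogeneous (d2 - 1)) (ha22 : a22.IsHomogeneous (d2 - 1))
    (hfa1 : f1 = X 0 * a11 + X 1 * a12)
    (hfa2 : f2 = X 0 * a21 + X 1 * a22)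
    -- ... with coefficients `q i`
    (q : ℕ → A)
    (hq : a11 * a22 - a12 * a21 =
      ∑ i ∈ Finset.range (d1 + d2 - 2 + 1), C (q i) * X 0 ^ (d1 + d2 - 2 - i) * X 1 ^ i) :
    res d1 d2 U V =
      (-1 : A) ^ (d1 + 1) *
        ∑ i ∈ Finset.range (d1 + d2 - 2 + 1),
          sres d1 d2 (d1 + d2 - 2) U V (d1 + d2 - 2 - i) * q i := by
  obtain ⟨e1, rfl⟩ : ∃ e, d1 = e + 1 := ⟨d1 - 1, by omega⟩
  obtain ⟨e2, rfl⟩ : ∃ e, d2 = e + 1 := ⟨d2 - 1, by omega⟩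
  simp only [Nat.add_sub_cancel] at ha11 ha12 ha21 ha22
  rw [show e1 + 1 + (e2 + 1) - 2 = e1 + e2 by omega] at hq ⊢
  rw [ha11.eq_binaryForm, ha12.eq_binaryForm] at hfa1 hq
  rw [ha21.eq_binaryForm, ha22.eq_binaryForm] at hfa2 hq
  exact res_eq_sum_sres_mul (hf1.symm.trans hfa1) (hf2.symm.trans hfa2) hq
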